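/- arXiv:2302.14412 — 2 statements merged into one kernel-verified Lean document; each statement's English description precedes it below -/
import Mathlib

section
/- Let G be a finite DAG, let U be a subset of its roots, and let G' be the DAG obtained from the 3n-world model of G sharing U by adding one new root vertex H as a parent of an arbitrary subset of the non-shared (duplicate) vertices. If w is the treewidth of the moral graph of G and w' is the treewidth of the moral graph of G', then w' ≤ 3n(w + 1). -/
/-! Preliminaries: vertex elimination, elimination orders, clusters, width,
moral graphs of DAGs. -/

variable {V : Type*}

/-- Eliminating a vertex `v` from a simple graph: connect every pair of neighbors of `v`,
then delete `v` (here: make `v` isolated, keeping the vertex type). -/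
def elimVertex (G : SimpleGraph V) (v : V) : SimpleGraph V where
  Adj x y := x ≠ y ∧ x ≠ v ∧ y ≠ v ∧ (G.Adj x y ∨ (G.Adj x v ∧ G.Adj y v))
  symm := by
    constructor
    rintro x y ⟨hxy, hxv, hyv, h⟩
    exact ⟨hxy.symm, hyv, hxv, h.imp (fun a => a.symm) And.symm⟩
  loopless := by constructor; rintro x ⟨h, -⟩; exact h rfl

/-- Eliminating a list of vertices successively. -/
def elimList (G : SimpleGraph V) (l : List V) : SimpleGraph V := l.foldl elimVertex G

/-- The cluster of the `i`-th vertex of an elimination order `π`: the vertex together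
with its neighbors in the graph just before it is eliminated. -/
def cluster (G : SimpleGraph V) (π : List V) (i : Fin π.length) : Set V :=
  insert (π.get i) ((elimList G (π.take i)).neighborSet (π.get i))

/-- The width of an elimination order: the size of its largest cluster minus one. -/
noncomputable def orderWidth (G : SimpleGraph V) (π : List V) : ℕ :=
  (Finset.univ.sup fun i : Fin π.length => (cluster G π i).ncard) - 1

/-- An elimination order for a graph on `V`: a list of all vertices without duplicates. -/
def IsElimOrder (π : List V) : Prop := π.Nodup ∧ ∀ v : V, v ∈ π

/-- A `U`-constrained elimination order: the vertices of `U` appear last. -/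
def IsUConstrained (U : Set V) (π : List V) : Prop :=
  ∃ l₁ l₂, π = l₁ ++ l₂ ∧ (∀ v ∈ l₁, v ∉ U) ∧ (∀ v ∈ l₂, v ∈ U)

/-- Acyclicity of a directed graph given by an edge (parent) relation `E`. -/
def IsAcyclicDigraph (E : V → V → Prop) : Prop := ∀ v, ¬ Relation.TransGen E v v

/-- A root of a DAG: a vertex with no parents. -/
def IsRoot (E : V → V → Prop) (v : V) : Prop := ∀ u, ¬ E u v

/-- The moral graph of a DAG: edge between distinct vertices iff one is a parent of
the other or they have a common child. -/
def MoralGraph (E : V → V → Prop) : SimpleGraph V where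
  Adj x y := x ≠ y ∧ (E x y ∨ E y x ∨ ∃ z, E x z ∧ E y z)
  symm := by
    constructor
    rintro x y ⟨hxy, h⟩
    exact ⟨hxy.symm, by tauto⟩
  loopless := by constructor; rintro x ⟨h, -⟩; exact h rfl

/-! The `n`-world model of a DAG sharing a set `U` of its roots. -/

/-- Vertices of the `n`-world model of a DAG on `V` sharing the roots `U`:
vertices in `U` are shared; every other vertex has `n` duplicates. -/
def WVertex (U : Set V) (n : ℕ) : Type _ := ↥U ⊕ (↥Uᶜ × Fin n)

/-- The copy of vertex `v` in world `k` (vertices in `U` are shared). -/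
def worldCopy (U : Set V) [DecidablePred (· ∈ U)] (n : ℕ) (k : Fin n) (v : V) :
    WVertex U n :=
  if h : v ∈ U then Sum.inl ⟨v, h⟩ else Sum.inr (⟨v, h⟩, k)

/-- Edge relation of the `n`-world model: each edge of the DAG is duplicated in each
copy. -/
def nWorldE (E : V → V → Prop) (U : Set V) [DecidablePred (· ∈ U)] (n : ℕ) :
    WVertex U n → WVertex U n → Prop :=
  fun a b => ∃ (x y : V) (k : Fin n),
    E x y ∧ a = worldCopy U n k x ∧ b = worldCopy U n k y

/-- The elimination order for the `n`-world model corresponding to an order `π`: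
replace each non-`U` vertex by its `n` duplicates (consecutively). -/
def liftOrder (U : Set V) [DecidablePred (· ∈ U)] (n : ℕ) (π : List V) :
    List (WVertex U n) :=
  π.flatMap fun v =>
    if h : v ∈ U then [Sum.inl ⟨v, h⟩]
    else (List.finRange n).map fun k => Sum.inr (⟨v, h⟩, k)

/-- Adding a new root vertex (`none`) as a parent of the vertices in `Z`. -/
def addRootE (E : V → V → Prop) (Z : Set V) : Option V → Option V → Prop :=
  fun x y => (∃ a b, E a b ∧ x = some a ∧ y = some b) ∨ (x = none ∧ ∃ b ∈ Z, y = some b)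

/-- The treewidth of a finite simple graph: the minimum width over all elimination
orders of its vertices. -/
noncomputable def graphTreewidth (G : SimpleGraph V) : ℕ :=
  sInf {w | ∃ π : List V, IsElimOrder π ∧ orderWidth G π = w}

/-! ### Auxiliary lemmas -/

section Aux

variable {A : Type*} {B : Type*}

lemma isolated_elimVertex {G : SimpleGraph A} {x : A} (h : ∀ y, ¬ G.Adj x y) (u : A) :
    ∀ y, ¬ (elimVertex G u).Adj x y := by
  rintro y ⟨-, -, -, h1 | ⟨h1, -⟩⟩ <;> exact h _ h1

lemma isolated_elimList {G : SimpleGraph A} {x : A} (h : ∀ y, ¬ G.Adj x y) (l : List A) :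
    ∀ y, ¬ (elimList G l).Adj x y := by
  induction l generalizing G with
  | nil => exact h
  | cons u l ih => exact ih (isolated_elimVertex h u)

lemma isolated_self_elimVertex (G : SimpleGraph A) (u : A) :
    ∀ y, ¬ (elimVertex G u).Adj u y := by rintro y ⟨-, h, -⟩; exact h rfl

lemma isolated_of_mem_elimList (G : SimpleGraph A) {l : List A} {x : A} (hx : x ∈ l) :
    ∀ y, ¬ (elimList G l).Adj x y := by
  induction l generalizing G with
  | nil => simp at hx
  | cons u l ih =>
    rcases List.mem_cons.1 hx with rfl | hx
    · exact isolated_elimList (isolated_self_elimVertex G x) l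
    · exact ih _ hx

lemma elimList_append (G : SimpleGraph A) (l₁ l₂ : List A) :
    elimList G (l₁ ++ l₂) = elimList (elimList G l₁) l₂ := List.foldl_append ..

lemma cluster_congr (G : SimpleGraph A) {l l' : List A} (h : l = l') (i : Fin l.length) :
    cluster G l i = cluster G l' ⟨i, h ▸ i.2⟩ := by subst h; rfl

lemma cluster_split_left' : True := trivial

lemma cluster_append_left (G : SimpleGraph A) (l₁ l₂ : List A) (i : Fin (l₁ ++ l₂).length)
    (hi : (i : ℕ) < l₁.length) : cluster G (l₁ ++ l₂) i = cluster G l₁ ⟨i, hi⟩ := by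
  unfold cluster
  simp only [List.get_eq_getElem, List.getElem_append_left hi,
    List.take_append_of_le_length (le_of_lt hi)]

lemma cluster_append_right (G : SimpleGraph A) (l₁ l₂ : List A) (i : Fin (l₁ ++ l₂).length)
    (hi : l₁.length ≤ (i : ℕ)) :
    cluster G (l₁ ++ l₂) i =
      cluster (elimList G l₁) l₂ ⟨(i : ℕ) - l₁.length, by
        have := i.2; simp only [List.length_append] at this; omega⟩ := by
  unfold cluster
  have htake : (l₁ ++ l₂).take (i : ℕ) = l₁ ++ l₂.take ((i : ℕ) - l₁.length) := by
    conv_lhs => rw [show (i : ℕ) = l₁.length + ((i : ℕ) - l₁.length) by omega]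
    exact List.take_length_add_append _
  simp only [List.get_eq_getElem, List.getElem_append_right hi, htake, elimList_append]

lemma cluster_split_left (G : SimpleGraph A) {l l₁ l₂ : List A} (h : l = l₁ ++ l₂)
    (i : Fin l.length) (hi : (i : ℕ) < l₁.length) :
    cluster G l i = cluster G l₁ ⟨i, hi⟩ := by
  subst h; exact cluster_append_left G l₁ l₂ i hi

lemma cluster_split_right (G : SimpleGraph A) {l l₁ l₂ : List A} (h : l = l₁ ++ l₂)
    (i : Fin l.length) (hi : l₁.length ≤ (i : ℕ)) (hlt : (i : ℕ) - l₁.length < l₂.length) :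
    cluster G l i = cluster (elimList G l₁) l₂ ⟨(i : ℕ) - l₁.length, hlt⟩ := by
  subst h; exact cluster_append_right G l₁ l₂ i hi

/-! Adding one extra vertex (`none`), eliminated last. -/

lemma invA {G : SimpleGraph B} {G' : SimpleGraph (Option B)}
    (h : ∀ a b, G'.Adj (some a) (some b) → G.Adj a b) (l : List B) :
    ∀ a b, (elimList G' (l.map some)).Adj (some a) (some b) → (elimList G l).Adj a b := by
  induction l generalizing G G' with
  | nil => exact h
  | cons u l ih =>
    refine ih ?_
    rintro a b ⟨hab, hau, hbu, h1 | ⟨h1, h2⟩⟩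
    · exact ⟨fun e => hab (congrArg _ e), fun e => hau (congrArg _ e),
        fun e => hbu (congrArg _ e), Or.inl (h _ _ h1)⟩
    · exact ⟨fun e => hab (congrArg _ e), fun e => hau (congrArg _ e),
        fun e => hbu (congrArg _ e), Or.inr ⟨h _ _ h1, h _ _ h2⟩⟩

lemma clusterA {G : SimpleGraph B} {G' : SimpleGraph (Option B)}
    (h : ∀ a b, G'.Adj (some a) (some b) → G.Adj a b)
    (π : List B) (i : Fin (π.map some ++ [none]).length) (hi : (i : ℕ) < π.length) :
    cluster G' (π.map some ++ [none]) i ⊆ insert none (some '' cluster G π ⟨i, hi⟩) := by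
  have hi' : (i : ℕ) < (π.map some).length := by simpa using hi
  rw [cluster_append_left G' (π.map some) [none] i hi']
  intro x hx
  rcases x with _ | a
  · exact Set.mem_insert _ _
  have hget : (π.map some).get ⟨(i : ℕ), hi'⟩ = some (π.get ⟨i, hi⟩) := by
    simp [List.get_eq_getElem]
  rcases hx with hx | hx
  · refine Set.mem_insert_of_mem _ ⟨π.get ⟨i, hi⟩, Set.mem_insert _ _, ?_⟩
    simp only [List.get_eq_getElem] at hx hget ⊢
    rw [hx, hget]
  · -- hx : adjacency
    simp only [SimpleGraph.mem_neighborSet, hget] at hx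
    have htake : (π.map some).take (i : ℕ) = (π.take (i : ℕ)).map some := by
      rw [List.map_take]
    rw [htake] at hx
    have := invA h (π.take (i : ℕ)) _ _ hx
    exact Set.mem_insert_of_mem _ ⟨a, Set.mem_insert_of_mem _ this, rfl⟩

lemma clusterA_last {G' : SimpleGraph (Option B)} (π : List B) (hπ : ∀ b : B, b ∈ π)
    (i : Fin (π.map some ++ [none]).length) (hi : (i : ℕ) = (π.map some).length) :
    cluster G' (π.map some ++ [none]) i ⊆ {none} := by
  rw [cluster_append_right G' (π.map some) [none] i (le_of_eq hi.symm)]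
  intro x hx
  have hsub : (i : ℕ) - (π.map some).length = 0 := by omega
  rcases hx with hx | hx
  · simp only [List.get_eq_getElem, hsub] at hx
    simpa using hx
  · exfalso
    simp only [SimpleGraph.mem_neighborSet, List.get_eq_getElem, hsub] at hx
    simp only [List.getElem_cons_zero, List.take_zero, elimList] at hx
    -- hx : (elimList G' (π.map some)).Adj none x
    rcases x with _ | a
    · exact hx.ne rfl
    · exact isolated_of_mem_elimList G'
        (by simp only [List.mem_map]; exact ⟨a, hπ a, rfl⟩) none hx.symm

/-! Blow-up lemma: lifting an elimination order along a fibration. -/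

variable (f : A → B)

/-- Invariant maintained while the fiber of `v` is being eliminated. -/
def InvV (G : SimpleGraph B) (v : B) (G' : SimpleGraph A) : Prop :=
  ∀ x y, G'.Adj x y → f x = f y ∨ G.Adj (f x) (f y) ∨
    ((f x = v ∨ G.Adj (f x) v) ∧ (f y = v ∨ G.Adj (f y) v))

lemma InvV.closed {G : SimpleGraph B} {v : B} {G' : SimpleGraph A}
    (h : InvV f G v G') {u x : A} (hu : f u = v) (hx : G'.Adj x u) :
    f x = v ∨ G.Adj (f x) v := by
  rcases h x u hx with e | e | ⟨e, -⟩
  · exact Or.inl (e.trans hu)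
  · rw [hu] at e; exact Or.inr e
  · exact e

lemma invV_of_hom {G : SimpleGraph B} {G' : SimpleGraph A}
    (h : ∀ x y, G'.Adj x y → f x = f y ∨ G.Adj (f x) (f y)) (v : B) : InvV f G v G' :=
  fun x y hxy => (h x y hxy).imp id Or.inl

lemma invV_elimVertex {G : SimpleGraph B} {v : B} {G' : SimpleGraph A}
    (h : InvV f G v G') {u : A} (hu : f u = v) : InvV f G v (elimVertex G' u) := by
  rintro x y ⟨hxy, hxu, hyu, h1 | ⟨h1, h2⟩⟩
  · exact h x y h1
  · exact Or.inr (Or.inr ⟨h.closed f hu h1, h.closed f hu h2⟩)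

lemma invV_elimList {G : SimpleGraph B} {v : B} {G' : SimpleGraph A}
    (h : InvV f G v G') (l : List A) (hl : ∀ x ∈ l, f x = v) :
    InvV f G v (elimList G' l) := by
  induction l generalizing G' with
  | nil => exact h
  | cons u l ih =>
    exact ih (invV_elimVertex f h (hl u List.mem_cons_self))
      (fun x hx => hl x (List.mem_cons_of_mem u hx))

lemma hom_elim_fiber {G : SimpleGraph B} {v : B} {G' : SimpleGraph A}
    (h : InvV f G v G') (hiso : ∀ x, f x = v → ∀ y, ¬ G'.Adj x y) :
    ∀ x y, G'.Adj x y → f x = f y ∨ (elimVertex G v).Adj (f x) (f y) := by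
  intro x y hxy
  by_cases e : f x = f y
  · exact Or.inl e
  have hxv : f x ≠ v := fun e' => hiso x e' y hxy
  have hyv : f y ≠ v := fun e' => hiso y e' x hxy.symm
  refine Or.inr ⟨e, hxv, hyv, ?_⟩
  rcases h x y hxy with e' | h' | ⟨h1, h2⟩
  · exact absurd e' e
  · exact Or.inl h'
  · exact Or.inr ⟨h1.resolve_left hxv, h2.resolve_left hyv⟩

lemma cluster_fiber_subset {G : SimpleGraph B} {v : B} {G' : SimpleGraph A}
    (h : InvV f G v G') {u : A} (hu : f u = v) :
    insert u (G'.neighborSet u) ⊆ f ⁻¹' insert v (G.neighborSet v) := by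
  rintro x hx
  rcases hx with rfl | hx
  · exact Set.mem_insert_iff.2 (Or.inl hu)
  · simp only [SimpleGraph.mem_neighborSet] at hx
    rcases h.closed f hu hx.symm with e | e
    · exact Set.mem_insert_iff.2 (Or.inl e)
    · exact Set.mem_insert_of_mem _ e.symm

variable [Fintype A] [DecidableEq B]

/-- The list of vertices in the fiber of `v`. -/
noncomputable def fiberL (v : B) : List A :=
  (Finset.univ.filter (fun x => f x = v)).toList

lemma mem_fiberL {v : B} {x : A} : x ∈ fiberL f v ↔ f x = v := by
  simp [fiberL]

/-- The lifted elimination order. -/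
noncomputable def liftB (π : List B) : List A := π.flatMap (fiberL f)

lemma clusterB : ∀ (π : List B) (G : SimpleGraph B) (G' : SimpleGraph A),
    (∀ x y, G'.Adj x y → f x = f y ∨ G.Adj (f x) (f y)) →
    ∀ i : Fin (liftB f π).length, ∃ j : Fin π.length,
      cluster G' (liftB f π) i ⊆ f ⁻¹' (cluster G π j) := by
  intro π
  induction π with
  | nil =>
    intro G G' _ i
    exact absurd i.2 (by simp [liftB])
  | cons v rest ih =>
    intro G G' hhom i
    have hsplit : liftB f (v :: rest) = fiberL f v ++ liftB f rest :=
      List.flatMap_cons ..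
    set L := fiberL f v with hL
    by_cases hi : (i : ℕ) < L.length
    · refine ⟨⟨0, by simp⟩, ?_⟩
      rw [cluster_split_left G' hsplit i hi]
      have hu : f (L.get ⟨(i : ℕ), hi⟩) = v :=
        (mem_fiberL f).1 (L.get_mem _)
      have hInv : InvV f G v (elimList G' (L.take (i : ℕ))) :=
        invV_elimList f (invV_of_hom f hhom v) _
          (fun x hx => (mem_fiberL f).1 (List.mem_of_mem_take hx))
      exact cluster_fiber_subset f hInv hu
    · push_neg at hi
      have hhom' : ∀ x y, (elimList G' L).Adj x y →
          f x = f y ∨ (elimVertex G v).Adj (f x) (f y) :=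
        hom_elim_fiber f
          (invV_elimList f (invV_of_hom f hhom v) L (fun x hx => (mem_fiberL f).1 hx))
          (fun x hx => isolated_of_mem_elimList G' ((mem_fiberL f).2 hx))
      have hlenEq : (liftB f (v :: rest)).length = L.length + (liftB f rest).length := by
        rw [hsplit, List.length_append]
      have hlen : (i : ℕ) - L.length < (liftB f rest).length := by
        have h2 := i.2
        omega
      obtain ⟨j, hj⟩ := ih (elimVertex G v) (elimList G' L) hhom' ⟨(i : ℕ) - L.length, hlen⟩
      refine ⟨j.succ, ?_⟩
      rw [cluster_split_right G' hsplit i hi hlen]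
      exact hj

omit [Fintype A] [DecidableEq B] in
lemma _root_.dummy_unused : True := trivial

lemma isElimOrder_liftB (f : A → B) [Fintype A] [DecidableEq B]
    {π : List B} (hπ : IsElimOrder π) : IsElimOrder (liftB f π) := by
  constructor
  · rw [liftB, List.nodup_flatMap]
    refine ⟨fun x _ => Finset.nodup_toList _, ?_⟩
    refine hπ.1.imp ?_
    intro a b hab x hxa hxb
    exact hab (((mem_fiberL f).1 hxa).symm.trans ((mem_fiberL f).1 hxb))
  · intro x
    rw [liftB, List.mem_flatMap]
    exact ⟨f x, hπ.2 _, (mem_fiberL f).2 rfl⟩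

end Aux

section Aux2

lemma ncard_preimage_le {A B : Type*} [Fintype A] (f : A → B) (m : ℕ)
    (hf : ∀ v : B, (f ⁻¹' {v}).ncard ≤ m) (S : Set B) (hS : S.Finite) :
    (f ⁻¹' S).ncard ≤ m * S.ncard := by
  refine Set.Finite.induction_on (motive := fun S _ => (f ⁻¹' S).ncard ≤ m * S.ncard) S hS
    (by simp) ?_
  intro a s ha hs ih
  calc (f ⁻¹' insert a s).ncard = (f ⁻¹' ({a} ∪ s)).ncard := by
        rw [Set.singleton_union]
    _ ≤ (f ⁻¹' {a}).ncard + (f ⁻¹' s).ncard := by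
        rw [Set.preimage_union]; exact Set.ncard_union_le _ _
    _ ≤ m + m * s.ncard := add_le_add (hf a) ih
    _ = m * (insert a s).ncard := by
        rw [Set.ncard_insert_of_notMem ha hs, mul_add, mul_one, add_comm]

lemma isElimOrder_option {A : Type*} {π : List A} (hπ : IsElimOrder π) :
    IsElimOrder (π.map some ++ [none]) := by
  constructor
  · refine List.Nodup.append (hπ.1.map (Option.some_injective _))
      (List.nodup_singleton _) ?_
    intro x hx hx'
    simp only [List.mem_singleton] at hx'
    subst hx'
    simp only [List.mem_map] at hx
    obtain ⟨a, -, h⟩ := hx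
    exact Option.some_ne_none a h
  · rintro (_ | a)
    · simp
    · simp only [List.mem_append, List.mem_map]
      exact Or.inl ⟨a, hπ.2 a, rfl⟩

lemma orderWidth_le {A : Type*} (G : SimpleGraph A) (π : List A) (c : ℕ)
    (h : ∀ i : Fin π.length, (cluster G π i).ncard ≤ c + 1) : orderWidth G π ≤ c := by
  rw [orderWidth]
  have : (Finset.univ.sup fun i : Fin π.length => (cluster G π i).ncard) ≤ c + 1 :=
    Finset.sup_le fun i _ => h i
  omega

lemma ncard_cluster_le {A : Type*} (G : SimpleGraph A) (π : List A) (i : Fin π.length) :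
    (cluster G π i).ncard ≤ orderWidth G π + 1 := by
  rw [orderWidth]
  exact le_trans (Finset.le_sup (f := fun i : Fin π.length => (cluster G π i).ncard)
    (Finset.mem_univ i)) (by omega)

end Aux2

/-- Let `G` be a finite DAG (edge relation `E` on `V`), `U` a subset of
its roots, and `G'` obtained from the `3n`-world model of `G` sharing `U` by adding one
new root vertex `H` (here `none`) as a parent of an arbitrary subset `Z'` of the
non-shared (duplicate) vertices. If `w` is the treewidth of the moral graph of `G` and
`w'` is the treewidth of the moral graph of `G'`, then `w' ≤ 3n(w + 1)`. -/
theorem stmt6 {V : Type*} [Fintype V] (E : V → V → Prop)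
    (hdag : IsAcyclicDigraph E)
    (U : Set V) [DecidablePred (· ∈ U)] (hU : ∀ u ∈ U, IsRoot E u)
    (n : ℕ) (hn : 0 < n)
    (Z' : Set (WVertex U (3 * n)))
    (hZ' : ∀ z ∈ Z', ∃ (x : ↥Uᶜ) (k : Fin (3 * n)), z = Sum.inr (x, k))
    (w : ℕ) (hw : graphTreewidth (MoralGraph E) = w) :
    graphTreewidth (MoralGraph (addRootE (nWorldE E U (3 * n)) Z')) ≤ 3 * n * (w + 1) := by
  classical
  haveI : Fintype (WVertex U (3 * n)) := by unfold WVertex; infer_instance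
  obtain ⟨π, hπ, hwπ⟩ : ∃ π : List V, IsElimOrder π ∧ orderWidth (MoralGraph E) π = w := by
    rw [← hw, graphTreewidth]
    have hne : {w0 | ∃ π : List V, IsElimOrder π ∧ orderWidth (MoralGraph E) π = w0}.Nonempty :=
      ⟨orderWidth (MoralGraph E) Finset.univ.toList, Finset.univ.toList,
        ⟨Finset.nodup_toList _, fun v => by simp⟩, rfl⟩
    exact Nat.sInf_mem hne
  set f : WVertex U (3 * n) → V := Sum.elim (fun u => (u : V)) (fun p => (p.1 : V)) with hf
  have f_worldCopy : ∀ (k : Fin (3 * n)) (x : V), f (worldCopy U (3 * n) k x) = x := by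
    intro k x
    by_cases h : x ∈ U
    · rw [show worldCopy U (3 * n) k x = Sum.inl ⟨x, h⟩ from dif_pos h]; rfl
    · rw [show worldCopy U (3 * n) k x = Sum.inr (⟨x, h⟩, k) from dif_neg h]; rfl
  set MB := MoralGraph (nWorldE E U (3 * n)) with hMB
  -- the fibration condition for the moral graphs
  have hhom : ∀ x y, MB.Adj x y → f x = f y ∨ (MoralGraph E).Adj (f x) (f y) := by
    rintro x y ⟨hxy, hE⟩
    rcases hE with h1 | h1 | ⟨z, h1, h2⟩
    · obtain ⟨a, b, k, hab, rfl, rfl⟩ := h1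
      rw [f_worldCopy, f_worldCopy]
      refine Or.inr ⟨?_, Or.inl hab⟩
      rintro rfl
      exact hdag _ (Relation.TransGen.single hab)
    · obtain ⟨a, b, k, hab, rfl, rfl⟩ := h1
      rw [f_worldCopy, f_worldCopy]
      refine Or.inr ⟨?_, Or.inr (Or.inl hab)⟩
      rintro rfl
      exact hdag _ (Relation.TransGen.single hab)
    · obtain ⟨a, c, k, hac, rfl, hz1⟩ := h1
      obtain ⟨b, c', k', hbc, rfl, hz2⟩ := h2
      rw [f_worldCopy, f_worldCopy]
      have hcU : c ∉ U := fun h => hU c h a hac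
      have hc'U : c' ∉ U := fun h => hU c' h b hbc
      have hzz : worldCopy U (3 * n) k c = worldCopy U (3 * n) k' c' := hz1.symm.trans hz2
      rw [show worldCopy U (3 * n) k c = Sum.inr (⟨c, hcU⟩, k) from dif_neg hcU,
        show worldCopy U (3 * n) k' c' = Sum.inr (⟨c', hc'U⟩, k') from dif_neg hc'U] at hzz
      have hcc' : c = c' := congrArg (fun p => (p.1 : V)) (Sum.inr.inj hzz)
      by_cases e : a = b
      · exact Or.inl e
      · exact Or.inr ⟨e, Or.inr (Or.inr ⟨c, hac, hcc' ▸ hbc⟩)⟩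
  -- fibers have at most 3n elements
  have hfib : ∀ v : V, (f ⁻¹' {v}).ncard ≤ 3 * n := by
    intro v
    by_cases hv : v ∈ U
    · have hsub : f ⁻¹' {v} ⊆ {Sum.inl ⟨v, hv⟩} := by
        rintro (u | ⟨a, k⟩) hx
        · have h1 : (u : V) = v := hx
          have h2 : u = ⟨v, hv⟩ := Subtype.ext h1
          rw [h2]; exact Set.mem_singleton _
        · have h1 : (a : V) = v := hx
          exact absurd hv (h1 ▸ a.2)
      calc (f ⁻¹' {v}).ncard ≤ ({Sum.inl ⟨v, hv⟩} : Set (WVertex U (3 * n))).ncard :=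
            Set.ncard_le_ncard hsub (Set.toFinite _)
        _ = 1 := Set.ncard_singleton _
        _ ≤ 3 * n := by omega
    · have hsub : f ⁻¹' {v} ⊆
          Set.range (fun k : Fin (3 * n) => (Sum.inr (⟨v, hv⟩, k) : WVertex U (3 * n))) := by
        rintro (u | ⟨a, k⟩) hx
        · have h1 : (u : V) = v := hx
          exact absurd (h1 ▸ u.2) hv
        · refine ⟨k, ?_⟩
          have h1 : (a : V) = v := hx
          have ha : a = ⟨v, hv⟩ := Subtype.ext h1
          rw [ha]
      calc (f ⁻¹' {v}).ncard ≤ (Set.range fun k : Fin (3 * n) =>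
              (Sum.inr (⟨v, hv⟩, k) : WVertex U (3 * n))).ncard :=
            Set.ncard_le_ncard hsub (Set.toFinite _)
        _ ≤ (Set.univ : Set (Fin (3 * n))).ncard := by
            rw [← Set.image_univ]
            exact Set.ncard_image_le (Set.toFinite _)
        _ = 3 * n := by rw [Set.ncard_univ, Nat.card_eq_fintype_card, Fintype.card_fin]
  -- the restriction of the big moral graph to `some` vertices
  have hres : ∀ a b, (MoralGraph (addRootE (nWorldE E U (3 * n)) Z')).Adj (some a) (some b) →
      MB.Adj a b := by
    rintro a b ⟨hab, h⟩
    have hne : a ≠ b := fun e => hab (congrArg _ e)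
    have extract : ∀ p q : WVertex U (3 * n),
        addRootE (nWorldE E U (3 * n)) Z' (some p) (some q) → nWorldE E U (3 * n) p q := by
      rintro p q (⟨a', b', h1, h2, h3⟩ | ⟨h1, -⟩)
      · obtain rfl := Option.some.inj h2
        obtain rfl := Option.some.inj h3
        exact h1
      · exact absurd h1 (Option.some_ne_none p)
    refine ⟨hne, ?_⟩
    rcases h with h1 | h1 | ⟨z, h1, h2⟩
    · exact Or.inl (extract _ _ h1)
    · exact Or.inr (Or.inl (extract _ _ h1))
    · rcases z with _ | z'
      · rcases h1 with ⟨a', b', -, -, h3⟩ | ⟨-, b', -, h3⟩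
        · exact absurd h3.symm (Option.some_ne_none b')
        · exact absurd h3.symm (Option.some_ne_none b')
      · exact Or.inr (Or.inr ⟨z', extract _ _ h1, extract _ _ h2⟩)
  set πB : List (WVertex U (3 * n)) := liftB f π with hπB
  have hπBElim : IsElimOrder πB := isElimOrder_liftB f hπ
  have hElim' : IsElimOrder (πB.map some ++ [none]) := isElimOrder_option hπBElim
  have hmem : orderWidth (MoralGraph (addRootE (nWorldE E U (3 * n)) Z'))
      (πB.map some ++ [none]) ∈
      {w' | ∃ π' : List (Option (WVertex U (3 * n))), IsElimOrder π' ∧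
        orderWidth (MoralGraph (addRootE (nWorldE E U (3 * n)) Z')) π' = w'} :=
    ⟨πB.map some ++ [none], hElim', rfl⟩
  rw [graphTreewidth]
  refine le_trans (Nat.sInf_le hmem) ?_
  refine orderWidth_le _ _ _ ?_
  intro i
  by_cases hi : (i : ℕ) < πB.length
  · obtain ⟨j, hj⟩ := clusterB f π (MoralGraph E) MB hhom ⟨(i : ℕ), hi⟩
    have hsub := clusterA hres πB i hi
    calc (cluster _ (πB.map some ++ [none]) i).ncard
        ≤ (insert none (some '' cluster MB πB ⟨(i : ℕ), hi⟩)).ncard :=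
          Set.ncard_le_ncard hsub (Set.toFinite _)
      _ ≤ (some '' cluster MB πB ⟨(i : ℕ), hi⟩).ncard + 1 := Set.ncard_insert_le _ _
      _ = (cluster MB πB ⟨(i : ℕ), hi⟩).ncard + 1 := by
          rw [Set.ncard_image_of_injective _ (Option.some_injective _)]
      _ ≤ (f ⁻¹' cluster (MoralGraph E) π j).ncard + 1 :=
          Nat.add_le_add_right (Set.ncard_le_ncard hj (Set.toFinite _)) 1
      _ ≤ 3 * n * (cluster (MoralGraph E) π j).ncard + 1 :=
          Nat.add_le_add_right (ncard_preimage_le f _ hfib _ (Set.toFinite _)) 1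
      _ ≤ 3 * n * (w + 1) + 1 := by
          have hcl := ncard_cluster_le (MoralGraph E) π j
          rw [hwπ] at hcl
          exact Nat.add_le_add_right (Nat.mul_le_mul_left _ hcl) 1
  · have heq : (i : ℕ) = (πB.map some).length := by
      have h2 := i.2
      have hlenEq : (List.map some πB ++ [none] :
          List (Option (WVertex U (3 * n)))).length = πB.length + 1 := by simp
      have hmapEq : (List.map (some : WVertex U (3 * n) → Option _) πB).length
          = πB.length := by simp
      omega
    have hsub := clusterA_last (G' := MoralGraph (addRootE (nWorldE E U (3 * n)) Z')) πB hπBElim.2 i heq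
    calc (cluster _ (πB.map some ++ [none]) i).ncard
        ≤ ({none} : Set (Option (WVertex U (3 * n)))).ncard :=
          Set.ncard_le_ncard hsub (Set.toFinite _)
      _ = 1 := Set.ncard_singleton _
      _ ≤ 3 * n * (w + 1) + 1 := by omega
end

section
/- Let G1 be a finite simple graph, let U be a subset of its vertices, and let S ⊆ U be such that for every two distinct vertices U1, U2 ∈ S there exists a path between U1 and U2 in G1 that does not pass through any vertex of U \ {U1, U2}. Then in the graph obtained from G1 by eliminating, in any order, all vertices not in U, every two distinct vertices of S are adjacent; i.e., S forms a clique in the resulting graph. -/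
/-! Preliminaries: vertex elimination, elimination orders, clusters, width,
moral graphs of DAGs. -/

variable {V : Type*}

lemma elim_walk {G : SimpleGraph V} {v : V} :
    ∀ n (a b : V) (p : G.Walk a b), p.length = n → a ≠ v → b ≠ v →
    ∃ q : (elimVertex G v).Walk a b,
      (∀ x ∈ q.support, x ∈ p.support) ∧ v ∉ q.support := by
  intro n
  induction n using Nat.strong_induction_on with
  | _ n ih =>
    intro a b p hn ha hb
    cases p with
    | nil => exact ⟨.nil, by simp, by simp [Ne.symm ha]⟩
    | @cons _ c _ h p' =>
      simp only [SimpleGraph.Walk.length_cons] at hn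
      by_cases hc : c = v
      · cases p' with
        | nil => exact absurd hc hb
        | @cons _ d _ h2 p'' =>
          subst hc
          simp only [SimpleGraph.Walk.length_cons] at hn
          have hd : d ≠ c := h2.ne'
          obtain ⟨q', hq1, hq2⟩ :=
            ih p''.length (by omega) d b p'' rfl hd hb
          by_cases had : a = d
          · subst had
            refine ⟨q', fun x hx => ?_, hq2⟩
            simp only [SimpleGraph.Walk.support_cons, List.mem_cons]
            exact Or.inr (Or.inr (hq1 x hx))
          · refine ⟨.cons ⟨had, ha, hd, Or.inr ⟨h, h2.symm⟩⟩ q', ?_, ?_⟩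
            · intro x hx
              change x ∈ a :: q'.support at hx
              simp only [SimpleGraph.Walk.support_cons, List.mem_cons] at hx ⊢
              rcases hx with rfl | hx
              · left; rfl
              · right; right; exact hq1 x hx
            · change c ∉ a :: q'.support
              simp only [SimpleGraph.Walk.support_cons, List.mem_cons]
              rintro (rfl | hx)
              · exact ha rfl
              · exact hq2 hx
      · obtain ⟨q', hq1, hq2⟩ := ih p'.length (by omega) c b p' rfl hc hb
        refine ⟨.cons ⟨h.ne, ha, hc, Or.inl h⟩ q', ?_, ?_⟩
        · intro x hx
          change x ∈ a :: q'.support at hx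
          simp only [SimpleGraph.Walk.support_cons, List.mem_cons] at hx ⊢
          rcases hx with rfl | hx
          · left; rfl
          · right; exact hq1 x hx
        · change v ∉ a :: q'.support
          simp only [SimpleGraph.Walk.support_cons, List.mem_cons]
          rintro (rfl | hx)
          · exact ha rfl
          · exact hq2 hx

lemma elim_list_walk {a b : V} (l : List V) :
    ∀ (G : SimpleGraph V), a ∉ l → b ∉ l → a ≠ b →
    ∀ (p : G.Walk a b), (∀ x ∈ p.support, x = a ∨ x = b ∨ x ∈ l) →
    (elimList G l).Adj a b := by
  induction l with
  | nil =>
    intro G _ _ hab p hint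
    cases p with
    | nil => exact absurd rfl hab
    | @cons _ c _ h p' =>
      have hc : c = a ∨ c = b ∨ c ∈ ([] : List V) :=
        hint c (by simp [SimpleGraph.Walk.support_cons])
      rcases hc with rfl | rfl | hc
      · exact absurd rfl h.ne
      · exact h
      · simp at hc
  | cons v l' ih =>
    intro G ha hb hab p hint
    have hav : a ≠ v := fun h => ha (h ▸ List.mem_cons_self)
    have hbv : b ≠ v := fun h => hb (h ▸ List.mem_cons_self)
    obtain ⟨q, hq1, hq2⟩ := elim_walk p.length a b p rfl hav hbv
    have : elimList G (v :: l') = elimList (elimVertex G v) l' := rfl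
    rw [this]
    refine ih (elimVertex G v) (fun h => ha (List.mem_cons_of_mem _ h))
      (fun h => hb (List.mem_cons_of_mem _ h)) hab q ?_
    intro x hx
    rcases hint x (hq1 x hx) with h1 | h1 | h1
    · exact Or.inl h1
    · exact Or.inr (Or.inl h1)
    · rcases List.mem_cons.mp h1 with rfl | h1
      · exact absurd hx hq2
      · exact Or.inr (Or.inr h1)

/-- Let `G1` be a finite simple graph, `U` a subset of its vertices,
and `S ⊆ U` such that for every two distinct vertices `U1, U2 ∈ S` there exists a path
between `U1` and `U2` in `G1` that does not pass through any vertex of `U \ {U1, U2}`.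
Then in the graph obtained from `G1` by eliminating, in any order `l`, all vertices not
in `U`, every two distinct vertices of `S` are adjacent; i.e. `S` forms a clique in the
resulting graph. -/
theorem stmt16 {V : Type*} [Fintype V] (G1 : SimpleGraph V)
    (U S : Set V) (hSU : S ⊆ U)
    (hS : ∀ u₁ ∈ S, ∀ u₂ ∈ S, u₁ ≠ u₂ →
      ∃ p : G1.Walk u₁ u₂, p.IsPath ∧ ∀ v ∈ p.support, v ∉ U \ {u₁, u₂})
    (l : List V) (hnd : l.Nodup) (hl : ∀ v : V, v ∈ l ↔ v ∉ U) :
    ∀ u₁ ∈ S, ∀ u₂ ∈ S, u₁ ≠ u₂ → (elimList G1 l).Adj u₁ u₂ := by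
  intro u₁ h₁ u₂ h₂ hne
  obtain ⟨p, _, hp⟩ := hS u₁ h₁ u₂ h₂ hne
  refine elim_list_walk l G1 ?_ ?_ hne p ?_
  · exact fun h => ((hl u₁).mp h) (hSU h₁)
  · exact fun h => ((hl u₂).mp h) (hSU h₂)
  · intro x hx
    have := hp x hx
    by_cases hxU : x ∈ U
    · have h12 : x = u₁ ∨ x = u₂ := by
        by_contra hc
        push_neg at hc
        exact this ⟨hxU, by simp [hc.1, hc.2]⟩
      rcases h12 with h | h
      · exact Or.inl h
      · exact Or.inr (Or.inl h)
    · exact Or.inr (Or.inr ((hl x).mpr hxU))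
end
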